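/- Let u(t) = Σ_{i=0}^{k-1} u_i δ^{(i)} be an admissible impulsive input (so that the output y from x(0)=0 is regular). Then the coefficient vector col(u_0, u_1, ..., u_{k-1}) lies in the kernel of the Markov parameter matrix M_k, i.e., D u_{k-1} = 0 and D u_{k-ℓ} + CB u_{k-ℓ+1} + CAB u_{k-ℓ+2} + ... + CA^{ℓ-2}B u_{k-1} = 0 for ℓ ∈ {2,...,k}. -/

import Mathlib

/-!
Multiplying `(sI - A)⁻¹` by `s ^ l` gives `∑_{i<l} s^i A^(l-1-i) + (sI - A)⁻¹ A^l`, so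
`G(s) U(s)` is a polynomial, whose coefficient of `s ^ t` is block row `k - 1 - t` of
`M_k col(u)`, plus `C (sI - A)⁻¹ w` for the constant vector `w = ∑_l A^l B u_l`. The latter is
strictly proper because `(sI - A)⁻¹ = χ_A(s)⁻¹ adj(sI - A)` and the adjugate has degree less than
`n = deg χ_A`. So the polynomial part of the strictly proper `G(s) U(s)` is strictly proper, hence
zero. Strict properness is `v r < 1` for the valuation `v` at infinity of `ℝ(s)`, which turns
these degree estimates into the ultrametric inequality.
-/

open Matrix Polynomial

noncomputable def Markov {n m p : ℕ} (A : Matrix (Fin n) (Fin n) ℝ) (B : Matrix (Fin n) (Fin m) ℝ)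
    (C : Matrix (Fin p) (Fin n) ℝ) (D : Matrix (Fin p) (Fin m) ℝ) (k : ℕ) :
    Matrix (Fin k × Fin p) (Fin k × Fin m) ℝ :=
  fun ir jc =>
    if (ir.1 : ℕ) + (jc.1 : ℕ) + 1 < k then 0
    else if (ir.1 : ℕ) + (jc.1 : ℕ) + 1 = k then D ir.2 jc.2
    else (C * A ^ ((ir.1 : ℕ) + (jc.1 : ℕ) - k) * B) ir.2 jc.2

/-- A rational function is strictly proper if its numerator degree is
strictly less than its denominator degree. -/
def StrictlyProper (r : RatFunc ℝ) : Prop := r.num.degree < r.denom.degree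

/-- The transfer matrix `G(s) = C (sI - A)⁻¹ B + D` of the system `Σ`. -/
noncomputable def transferMatrix {n m p : ℕ} (A : Matrix (Fin n) (Fin n) ℝ)
    (B : Matrix (Fin n) (Fin m) ℝ) (C : Matrix (Fin p) (Fin n) ℝ)
    (D : Matrix (Fin p) (Fin m) ℝ) : Matrix (Fin p) (Fin m) (RatFunc ℝ) :=
  C.map (algebraMap ℝ (RatFunc ℝ)) *
      (Matrix.scalar (Fin n) (RatFunc.X : RatFunc ℝ) - A.map (algebraMap ℝ (RatFunc ℝ)))⁻¹ *
      B.map (algebraMap ℝ (RatFunc ℝ)) +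
    D.map (algebraMap ℝ (RatFunc ℝ))

open scoped RatFunc

section Valuation

variable {R Γ₀ : Type*} [CommRing R] [LinearOrderedCommGroupWithZero Γ₀] (v : Valuation R Γ₀)

theorem Valuation.map_dotProduct_lt_one {ι : Type*} [Fintype ι] {x y : ι → R}
    (hx : ∀ j, v (x j) ≤ 1) (hy : ∀ j, v (y j) < 1) : v (x ⬝ᵥ y) < 1 :=
  v.map_sum_lt one_ne_zero fun j _ => by
    rw [map_mul]
    exact (mul_le_of_le_one_left' (hx j)).trans_lt (hy j)

theorem Valuation.map_adjugate_apply_le_one {ι : Type*} [Fintype ι] [DecidableEq ι]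
    {M : Matrix ι ι R} (hM : ∀ i j, v (M i j) ≤ 1) (i j : ι) : v (M.adjugate i j) ≤ 1 := by
  let M' : Matrix ι ι v.integer := fun a b => ⟨M a b, hM a b⟩
  have hM' : M = v.integer.subtype.mapMatrix M' := rfl
  rw [hM', ← RingHom.map_adjugate]
  exact (M'.adjugate i j).2

end Valuation

theorem Matrix.map_mulVec_comp {R S ι κ : Type*} [NonAssocSemiring R] [NonAssocSemiring S]
    [Fintype κ] (f : R →+* S) (M : Matrix ι κ R) (x : κ → R) :
    M.map f *ᵥ (f ∘ x) = f ∘ (M *ᵥ x) :=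
  funext fun i => (f.map_mulVec M x i).symm

theorem pow_smul_eq_sum_add_mul_pow {R S : Type*} [CommRing R] [Ring S] [Algebra R S] {s : R}
    {a r : S} (h : r * (algebraMap R S s - a) = 1) (l : ℕ) :
    s ^ l • r = ∑ i ∈ Finset.range l, s ^ i • a ^ (l - 1 - i) + r * a ^ l := by
  have hc : Commute (algebraMap R S s) a := Algebra.commute_algebraMap_left s a
  calc s ^ l • r = r * (algebraMap R S s ^ l - a ^ l) + r * a ^ l := by
        rw [Algebra.smul_def, Algebra.commutes, map_pow]
        noncomm_ring
    _ = _ := by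
        rw [← hc.mul_geom_sum₂, ← mul_assoc, h, one_mul]
        simp only [Algebra.smul_def, map_pow]

theorem Fin.sum_sum_range_eq_sum_sum_lt {k : ℕ} {M : Type*} [AddCommMonoid M]
    (F : ℕ → Fin k → M) :
    ∑ l : Fin k, ∑ i ∈ Finset.range l, F i l = ∑ t : Fin k, ∑ l with t < l, F t l := by
  rw [Finset.sum_comm' (t' := Finset.range k)
    (s' := fun i => Finset.univ.filter fun l : Fin k => i < (l : ℕ))]
  · exact (Fin.sum_univ_eq_sum_range
      (fun i => ∑ l ∈ Finset.univ.filter fun l : Fin k => i < (l : ℕ), F i l) k).symm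
  · intro l i
    simp only [Finset.mem_univ, Finset.mem_range, Finset.mem_filter, true_and]
    omega

section PolyVec

variable {K ι : Type*} [Field K]

noncomputable def polyVec {k : ℕ} (c : Fin k → ι → K) : ι → K[X] :=
  fun i => ∑ l : Fin k, C (c l i) * X ^ (l : ℕ)

theorem polyVec_eq_zero_iff {k : ℕ} {c : Fin k → ι → K} : polyVec c = 0 ↔ c = 0 := by
  refine ⟨fun h => ?_, by rintro rfl; funext i; simp [polyVec]⟩
  ext t i
  simpa [polyVec, coeff_X_pow, Fin.val_eq_val, eq_comm] using
    congrArg (fun q => q.coeff t) (congrFun h i)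

theorem algebraMap_comp_polyVec {k : ℕ} (c : Fin k → ι → K) :
    algebraMap K[X] K⟮X⟯ ∘ polyVec c =
      ∑ l : Fin k, (RatFunc.X : K⟮X⟯) ^ (l : ℕ) • (algebraMap K K⟮X⟯ ∘ c l) := by
  ext i
  simp only [polyVec, Function.comp_apply, Finset.sum_apply, Pi.smul_apply, smul_eq_mul, map_sum,
    map_mul, map_pow, RatFunc.algebraMap_X, RatFunc.algebraMap_C, RatFunc.algebraMap_eq_C]
  exact Finset.sum_congr rfl fun _ _ => mul_comm _ _

end PolyVec

section Resolvent

variable {K ι : Type*} [Field K] [Fintype ι] [DecidableEq ι]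

theorem det_scalar_X_sub_map_algebraMap (A : Matrix ι ι K) :
    (scalar ι (RatFunc.X : K⟮X⟯) - A.map (algebraMap K K⟮X⟯)).det =
      algebraMap K[X] K⟮X⟯ A.charpoly := by
  rw [charpoly, RingHom.map_det]
  congr 1
  ext a b
  by_cases h : a = b <;>
    simp [h, charmatrix, RatFunc.algebraMap_X, RatFunc.algebraMap_C, RatFunc.algebraMap_eq_C]

theorem X_pow_smul_inv_scalar_X_sub (A : Matrix ι ι K) (l : ℕ) :
    (RatFunc.X : K⟮X⟯) ^ l • (scalar ι RatFunc.X - A.map (algebraMap K K⟮X⟯))⁻¹ =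
      ∑ i ∈ Finset.range l, (RatFunc.X : K⟮X⟯) ^ i • (A ^ (l - 1 - i)).map (algebraMap K K⟮X⟯) +
        (scalar ι RatFunc.X - A.map (algebraMap K K⟮X⟯))⁻¹ * (A ^ l).map (algebraMap K K⟮X⟯) := by
  have hunit : IsUnit (scalar ι (RatFunc.X : K⟮X⟯) - A.map (algebraMap K K⟮X⟯)).det := by
    rw [det_scalar_X_sub_map_algebraMap, isUnit_iff_ne_zero, Ne,
      map_eq_zero_iff _ (IsFractionRing.injective K[X] K⟮X⟯)]
    exact A.charpoly_monic.ne_zero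
  have hX : scalar ι (RatFunc.X : K⟮X⟯) = algebraMap K⟮X⟯ (Matrix ι ι K⟮X⟯) RatFunc.X := by
    rw [algebraMap_eq_diagonal, scalar_apply]
    rfl
  have h := nonsing_inv_mul _ hunit
  rw [hX] at h ⊢
  simp only [pow_smul_eq_sum_add_mul_pow h, Matrix.map_pow]

variable [DecidableEq K⟮X⟯]

theorem RatFunc.inftyValuation_algebraMap_le_one (a : K) :
    inftyValuation K (algebraMap K K⟮X⟯ a) ≤ 1 := by
  rcases eq_or_ne a 0 with rfl | ha
  · simp
  · exact (Valuation.IsTrivialOn.eq_one a ha).le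

theorem RatFunc.inftyValuation_polynomial_lt_one_iff {p : K[X]} :
    inftyValuation K (algebraMap K[X] K⟮X⟯ p) < 1 ↔ p = 0 := by
  rcases eq_or_ne p 0 with rfl | hp
  · simp
  · rw [inftyValuation_apply, inftyValuation.polynomial K hp, iff_false_intro hp, iff_false,
      not_lt, ← WithZero.exp_zero, WithZero.exp_le_exp]
    positivity

/-- `(sI - A)⁻¹ = χ_A(s)⁻¹ s^(n-1) adj(1 - s⁻¹ A)`, and the adjugate has valuation at most `1`
because `1 - s⁻¹ A` has. -/
theorem RatFunc.inftyValuation_inv_scalar_X_sub_apply_lt_one (A : Matrix ι ι K) (i j : ι) :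
    inftyValuation K ((scalar ι (RatFunc.X : K⟮X⟯) - A.map (algebraMap K K⟮X⟯))⁻¹ i j) < 1 := by
  set v := inftyValuation K
  set N := 1 - (RatFunc.X : K⟮X⟯)⁻¹ • A.map (algebraMap K K⟮X⟯)
  have hfactor : scalar ι (RatFunc.X : K⟮X⟯) - A.map (algebraMap K K⟮X⟯) =
      (RatFunc.X : K⟮X⟯) • N := by
    rw [smul_sub, smul_smul, mul_inv_cancel₀ (RatFunc.X_ne_zero (K := K)), one_smul,
      smul_one_eq_diagonal, scalar_apply]
  have hX_inv : v (RatFunc.X : K⟮X⟯)⁻¹ ≤ 1 := by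
    rw [map_inv₀, inftyValuation.X, ← WithZero.exp_neg, ← WithZero.exp_zero, WithZero.exp_le_exp]
    norm_num
  have hN : ∀ a b, v (N a b) ≤ 1 := by
    intro a b
    refine (v.map_sub _ _).trans (max_le ?_ ?_)
    · rw [one_apply]
      split_ifs <;> simp only [map_one, map_zero, le_refl, zero_le]
    · rw [Matrix.smul_apply, smul_eq_mul, map_mul]
      exact mul_le_one' hX_inv (inftyValuation_algebraMap_le_one _)
  have hcard : 1 ≤ Fintype.card ι := Fintype.card_pos_iff.mpr ⟨i⟩
  rw [Matrix.inv_def, det_scalar_X_sub_map_algebraMap, hfactor, adjugate_smul, Matrix.smul_apply,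
    Matrix.smul_apply, smul_eq_mul, smul_eq_mul, Ring.inverse_eq_inv', map_mul, map_mul, map_inv₀,
    map_pow, inftyValuation_apply, inftyValuation.polynomial K A.charpoly_monic.ne_zero,
    charpoly_natDegree_eq_dim, inftyValuation.X]
  calc _ ≤ (WithZero.exp (Fintype.card ι : ℤ))⁻¹ *
        (WithZero.exp (1 : ℤ) ^ (Fintype.card ι - 1) * 1) := by
        gcongr
        exact v.map_adjugate_apply_le_one hN i j
    _ = WithZero.exp (-1) := by
        rw [mul_one, ← WithZero.exp_nsmul, ← WithZero.exp_neg, ← WithZero.exp_add]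
        congr 1
        simp only [nsmul_eq_mul, mul_one, Nat.cast_sub hcard]
        ring
    _ < 1 := by
        rw [← WithZero.exp_zero, WithZero.exp_lt_exp]
        norm_num

theorem RatFunc.inftyValuation_map_mul_inv_scalar_X_sub_mulVec_lt_one {κ : Type*}
    (A : Matrix ι ι K) (C : Matrix κ ι K) (w : ι → K) (i : κ) :
    inftyValuation K (((C.map (algebraMap K K⟮X⟯) *
      (scalar ι RatFunc.X - A.map (algebraMap K K⟮X⟯))⁻¹) *ᵥ (algebraMap K K⟮X⟯ ∘ w)) i) < 1 := by
  rw [← mulVec_mulVec]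
  refine (inftyValuation K).map_dotProduct_lt_one (fun _ => inftyValuation_algebraMap_le_one _)
    fun b => ?_
  rw [mulVec, dotProduct_comm]
  exact (inftyValuation K).map_dotProduct_lt_one (fun _ => inftyValuation_algebraMap_le_one _)
    fun c => inftyValuation_inv_scalar_X_sub_apply_lt_one A b c

end Resolvent

theorem strictlyProper_iff_inftyValuation_lt_one [DecidableEq (RatFunc ℝ)] (r : RatFunc ℝ) :
    StrictlyProper r ↔ RatFunc.inftyValuation ℝ r < 1 := by
  rcases eq_or_ne r 0 with rfl | hr
  · simp [StrictlyProper]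
  · rw [StrictlyProper, RatFunc.inftyValuation_apply, RatFunc.inftyValuation_of_nonzero ℝ hr,
      ← WithZero.exp_zero, WithZero.exp_lt_exp, RatFunc.intDegree,
      degree_eq_natDegree (RatFunc.num_ne_zero hr), degree_eq_natDegree r.denom_ne_zero]
    simp only [Nat.cast_withBot, WithBot.coe_lt_coe, sub_neg, Nat.cast_lt]

section System

variable {n m p k : ℕ} (A : Matrix (Fin n) (Fin n) ℝ) (B : Matrix (Fin n) (Fin m) ℝ)
    (C : Matrix (Fin p) (Fin n) ℝ) (D : Matrix (Fin p) (Fin m) ℝ)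

theorem X_pow_smul_transferMatrix (l : ℕ) :
    (RatFunc.X : ℝ⟮X⟯) ^ l • transferMatrix A B C D =
      ∑ i ∈ Finset.range l,
          (RatFunc.X : ℝ⟮X⟯) ^ i • (C * A ^ (l - 1 - i) * B).map (algebraMap ℝ ℝ⟮X⟯) +
        C.map (algebraMap ℝ ℝ⟮X⟯) * (scalar (Fin n) RatFunc.X - A.map (algebraMap ℝ ℝ⟮X⟯))⁻¹ *
          (A ^ l * B).map (algebraMap ℝ ℝ⟮X⟯) +
        (RatFunc.X : ℝ⟮X⟯) ^ l • D.map (algebraMap ℝ ℝ⟮X⟯) := by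
  rw [transferMatrix, smul_add, ← Matrix.smul_mul, ← Matrix.mul_smul, X_pow_smul_inv_scalar_X_sub,
    Matrix.mul_add, Matrix.add_mul, Matrix.mul_sum, Matrix.sum_mul]
  simp only [Matrix.mul_smul, Matrix.smul_mul, Matrix.map_mul, Matrix.mul_assoc]

/-- The coefficient of `s ^ t` in the polynomial part of `G(s) U(s)`. -/
noncomputable def polynomialPartCoeff (u : Fin k → Fin m → ℝ) (t : Fin k) : Fin p → ℝ :=
  D *ᵥ u t + ∑ l with t < l, (C * A ^ ((l : ℕ) - 1 - t) * B) *ᵥ u l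

theorem transferMatrix_mulVec_polyVec (u : Fin k → Fin m → ℝ) :
    transferMatrix A B C D *ᵥ (algebraMap ℝ[X] ℝ⟮X⟯ ∘ polyVec u) =
      algebraMap ℝ[X] ℝ⟮X⟯ ∘ polyVec (polynomialPartCoeff A B C D u) +
        (C.map (algebraMap ℝ ℝ⟮X⟯) * (scalar (Fin n) RatFunc.X - A.map (algebraMap ℝ ℝ⟮X⟯))⁻¹) *ᵥ
          (algebraMap ℝ ℝ⟮X⟯ ∘ ∑ l : Fin k, (A ^ (l : ℕ) * B) *ᵥ u l) := by
  rw [algebraMap_comp_polyVec, algebraMap_comp_polyVec, mulVec_sum]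
  simp only [mulVec_smul, ← smul_mulVec, X_pow_smul_transferMatrix]
  simp only [add_mulVec, sum_mulVec, smul_mulVec, map_mulVec_comp]
  rw [Finset.sum_add_distrib, Finset.sum_add_distrib, Fin.sum_sum_range_eq_sum_sum_lt]
  have hpoly : ∑ t : Fin k, ∑ l with t < l, (RatFunc.X : ℝ⟮X⟯) ^ (t : ℕ) •
        (algebraMap ℝ ℝ⟮X⟯ ∘ ((C * A ^ ((l : ℕ) - 1 - t) * B) *ᵥ u l)) +
      ∑ t : Fin k, (RatFunc.X : ℝ⟮X⟯) ^ (t : ℕ) • (algebraMap ℝ ℝ⟮X⟯ ∘ (D *ᵥ u t)) =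
      ∑ t : Fin k, (RatFunc.X : ℝ⟮X⟯) ^ (t : ℕ) •
        (algebraMap ℝ ℝ⟮X⟯ ∘ polynomialPartCoeff A B C D u t) := by
    ext i
    simp only [polynomialPartCoeff, Finset.sum_apply, Pi.add_apply, Pi.smul_apply,
      Function.comp_apply, map_add, map_sum, smul_add, Finset.smul_sum, Finset.sum_add_distrib,
      add_comm]
  have hrem : ∑ l : Fin k, (C.map (algebraMap ℝ ℝ⟮X⟯) *
        (scalar (Fin n) RatFunc.X - A.map (algebraMap ℝ ℝ⟮X⟯))⁻¹ *
          (A ^ (l : ℕ) * B).map (algebraMap ℝ ℝ⟮X⟯)) *ᵥ (algebraMap ℝ ℝ⟮X⟯ ∘ u l) =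
      (C.map (algebraMap ℝ ℝ⟮X⟯) * (scalar (Fin n) RatFunc.X - A.map (algebraMap ℝ ℝ⟮X⟯))⁻¹) *ᵥ
          (algebraMap ℝ ℝ⟮X⟯ ∘ ∑ l : Fin k, (A ^ (l : ℕ) * B) *ᵥ u l) := by
    simp only [← mulVec_mulVec, map_mulVec_comp, ← mulVec_sum]
    congr 2
    ext i
    simp only [Finset.sum_apply, Function.comp_apply, map_sum]
  rw [hrem, ← hpoly]
  abel

theorem markov_mulVec_apply_rev (u : Fin k → Fin m → ℝ) (t : Fin k) (i : Fin p) :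
    (Markov A B C D k *ᵥ fun jc => u jc.1 jc.2) (t.rev, i) = polynomialPartCoeff A B C D u t i := by
  have hrow : ∀ l j, Markov A B C D k (t.rev, i) (l, j) =
      (if l = t then D i j else 0) +
        (if t < l then (C * A ^ ((l : ℕ) - 1 - t) * B) i j else 0) := by
    intro l j
    simp only [Markov, Fin.val_rev]
    rcases lt_trichotomy l t with h | rfl | h
    · rw [if_pos (by omega), if_neg h.ne, if_neg (lt_asymm h), add_zero]
    · rw [if_neg (by omega), if_pos (by omega), if_pos rfl, if_neg (lt_irrefl _), add_zero]
    · rw [if_neg (by omega), if_neg (by omega), if_neg h.ne', if_pos h, zero_add,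
        show k - ((t : ℕ) + 1) + l - k = l - 1 - t by omega]
  simp only [mulVec, dotProduct, Fintype.sum_prod_type, hrow, add_mul, Finset.sum_add_distrib,
    ite_mul, zero_mul, Finset.sum_ite_irrel, Finset.sum_const_zero, Finset.sum_ite_eq',
    Finset.mem_univ, if_true, polynomialPartCoeff, Pi.add_apply, Finset.sum_apply,
    Finset.sum_filter, ite_apply, Pi.zero_apply]

end System

/-- If `u(t) = Σ_{i=0}^{k-1} uᵢ δ⁽ⁱ⁾` is an admissible impulsive input (i.e.
`G(s)U(s)` is strictly proper), then `col(u₀, …, u_{k-1}) ∈ ker M_k`. -/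
theorem admissible_in_kernel {n m p k : ℕ}
    (A : Matrix (Fin n) (Fin n) ℝ) (B : Matrix (Fin n) (Fin m) ℝ)
    (C : Matrix (Fin p) (Fin n) ℝ) (D : Matrix (Fin p) (Fin m) ℝ)
    (u : Fin k → Fin m → ℝ)
    (hadm : ∀ i, StrictlyProper
      (((transferMatrix A B C D).mulVec fun j => algebraMap (Polynomial ℝ) (RatFunc ℝ)
        (∑ l : Fin k, Polynomial.C (u l j) * Polynomial.X ^ (l : ℕ))) i)) :
    (Markov A B C D k).mulVec (fun jc => u jc.1 jc.2) = 0 := by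
  classical
  have hpart : polyVec (polynomialPartCoeff A B C D u) = 0 := by
    funext i
    rw [Pi.zero_apply, ← RatFunc.inftyValuation_polynomial_lt_one_iff,
      ← Function.comp_apply (f := algebraMap ℝ[X] ℝ⟮X⟯),
      eq_sub_of_add_eq (transferMatrix_mulVec_polyVec A B C D u).symm, Pi.sub_apply]
    exact Valuation.map_sub_lt _ ((strictlyProper_iff_inftyValuation_lt_one _).1 (hadm i))
      (RatFunc.inftyValuation_map_mul_inv_scalar_X_sub_mulVec_lt_one A C _ i)
  funext ⟨r, i⟩
  rw [← Fin.rev_rev r, markov_mulVec_apply_rev, polyVec_eq_zero_iff.1 hpart]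
  rfl
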